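/- arXiv:0805.2264 — 3 statements merged into one kernel-verified Lean document; each statement's English description precedes it below -/
import Mathlib

section
/- The map F ↦ π(F) := inf{(1-F(λ))/(1-λ) : 0 < λ < 1} is upper-semicontinuous on F with respect to weak convergence: if F_n → F weakly in F, then limsup_{n→∞} π(F_n) ≤ π(F). -/
open Set Filter

/-- A cumulative distribution function of a probability measure on [0,1]. -/
def IsCDF01 (H : ℝ → ℝ) : Prop :=
  Monotone H ∧ (∀ x, x < 0 → H x = 0) ∧ (∀ x, 1 ≤ x → H x = 1) ∧
    ∀ x, ContinuousWithinAt H (Ici x) x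

/-- CDF of the uniform distribution on [0,1]. -/
noncomputable def unifCDF (x : ℝ) : ℝ := max 0 (min x 1)

/-- The mixture `π · Uniform + (1-π) · H`. -/
noncomputable def mix (p : ℝ) (H : ℝ → ℝ) (x : ℝ) : ℝ :=
  p * unifCDF x + (1 - p) * H x

/-- Weak convergence of CDFs: pointwise convergence at continuity points of the limit. -/
def WeakConv (Fn : ℕ → ℝ → ℝ) (F : ℝ → ℝ) : Prop :=
  ∀ x, ContinuousAt F x → Tendsto (fun n => Fn n x) atTop (nhds (F x))

/-- `π(F) = inf { (1 - F(λ))/(1-λ) : 0 < λ < 1 }`. -/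
noncomputable def piF (F : ℝ → ℝ) : ℝ :=
  ⨅ l : Ioo (0:ℝ) 1, (1 - F l) / (1 - l)

lemma cdf_le_one {H : ℝ → ℝ} (hH : IsCDF01 H) (x : ℝ) : H x ≤ 1 := by
  obtain ⟨hm, h0, h1, _⟩ := hH
  calc H x ≤ H (max x 1) := hm (le_max_left _ _)
    _ = 1 := h1 _ (le_max_right _ _)

lemma unifCDF_le_one (x : ℝ) : unifCDF x ≤ 1 := by
  unfold unifCDF
  simp [min_le_right x 1]

lemma unifCDF_mono : Monotone unifCDF :=
  fun a b hab => max_le_max le_rfl (min_le_min hab le_rfl)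

lemma mix_le_one {p : ℝ} {H : ℝ → ℝ} (hp : p ∈ Icc (0:ℝ) 1) (hH : IsCDF01 H) (x : ℝ) :
    mix p H x ≤ 1 := by
  have h1 := unifCDF_le_one x
  have h2 := cdf_le_one hH x
  have h3 : 0 ≤ unifCDF x := le_max_left _ _
  unfold mix
  nlinarith [hp.1, hp.2]

lemma mix_mono {p : ℝ} {H : ℝ → ℝ} (hp : p ∈ Icc (0:ℝ) 1) (hH : IsCDF01 H) :
    Monotone (mix p H) := fun a b hab =>
  add_le_add (mul_le_mul_of_nonneg_left (unifCDF_mono hab) hp.1)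
    (mul_le_mul_of_nonneg_left (hH.1 hab) (by linarith [hp.2]))

lemma piF_bddBelow {F : ℝ → ℝ} (hF : ∀ x, F x ≤ 1) :
    BddBelow (Set.range fun l : Ioo (0:ℝ) 1 => (1 - F l) / (1 - l)) := by
  refine ⟨0, forall_mem_range.2 fun ⟨m, hm⟩ => div_nonneg ?_ ?_⟩
  · linarith [hF m]
  · linarith [hm.2]

lemma piF_le {F : ℝ → ℝ} (hF : ∀ x, F x ≤ 1) {l : ℝ} (hl : l ∈ Ioo (0:ℝ) 1) :
    piF F ≤ (1 - F l) / (1 - l) :=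
  ciInf_le (piF_bddBelow hF) ⟨l, hl⟩

lemma piF_nonneg {F : ℝ → ℝ} (hF : ∀ x, F x ≤ 1) : 0 ≤ piF F := by
  haveI : Nonempty (Ioo (0:ℝ) 1) := ⟨⟨1/2, by norm_num⟩⟩
  exact le_ciInf fun ⟨m, hm⟩ => div_nonneg (by linarith [hF m]) (by linarith [hm.2])

/-- `F ↦ π(F)` is upper-semicontinuous with respect to weak
convergence within the mixture class. -/
theorem piF_upper_semicontinuous
    (pn : ℕ → ℝ) (Hn : ℕ → ℝ → ℝ) (p : ℝ) (H : ℝ → ℝ)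
    (hpn : ∀ n, pn n ∈ Icc (0:ℝ) 1) (hHn : ∀ n, IsCDF01 (Hn n))
    (hp : p ∈ Icc (0:ℝ) 1) (hH : IsCDF01 H)
    (hconv : WeakConv (fun n => mix (pn n) (Hn n)) (mix p H)) :
    Filter.limsup (fun n => piF (mix (pn n) (Hn n))) atTop ≤ piF (mix p H) := by
  set F := mix p H with hFdef
  have hFle : ∀ x, F x ≤ 1 := mix_le_one hp hH
  have hFmono : Monotone F := mix_mono hp hH
  have hFnle : ∀ n x, mix (pn n) (Hn n) x ≤ 1 := fun n => mix_le_one (hpn n) (hHn n)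
  apply le_of_forall_pos_le_add
  intro ε hε
  -- pick λ with value close to the infimum
  haveI : Nonempty (Ioo (0:ℝ) 1) := ⟨⟨1/2, by norm_num⟩⟩
  have h1 : piF F < piF F + ε / 2 := by linarith
  obtain ⟨⟨l, hl⟩, hlval⟩ := exists_lt_of_ciInf_lt h1
  -- continuity points of F are dense
  have hD : Dense {x : ℝ | ContinuousAt F x} := by
    have hc : Set.Countable {x : ℝ | ¬ ContinuousAt F x} :=
      hFmono.countable_not_continuousAt
    have := hc.dense_compl ℝ
    simpa [compl_setOf] using this
  -- find a continuity point μ ∈ (l, 1) with (1 - F l)/(1-μ) close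
  have hl1 : (1:ℝ) - l > 0 := by linarith [hl.2]
  have hcont : Tendsto (fun μ : ℝ => (1 - F l) / (1 - μ)) (nhdsWithin l (Ioi l))
      (nhds ((1 - F l) / (1 - l))) := by
    apply Tendsto.mono_left _ nhdsWithin_le_nhds
    exact tendsto_const_nhds.div (tendsto_const_nhds.sub tendsto_id) (by linarith)
  have hev1 : ∀ᶠ μ in nhdsWithin l (Ioi l),
      (1 - F l) / (1 - μ) < (1 - F l) / (1 - l) + ε / 2 :=
    hcont.eventually_lt_const (by linarith)
  have hev2 : Ioo l 1 ∈ nhdsWithin l (Ioi l) :=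
    Ioo_mem_nhdsGT_of_mem ⟨le_refl l, hl.2⟩
  obtain ⟨u, hu, hsub⟩ := mem_nhdsGT_iff_exists_Ioo_subset.1 (hev1.and (eventually_of_mem hev2 fun x hx => hx))
  obtain ⟨mu, hmuD, hmuI⟩ := hD.exists_mem_open isOpen_Ioo
    (nonempty_Ioo.2 (by exact hu))
  obtain ⟨hmu1, hmu2⟩ := hsub hmuI
  -- mu is a continuity point of F in (l,1)
  have hmu01 : mu ∈ Ioo (0:ℝ) 1 := ⟨lt_trans hl.1 hmu2.1, hmu2.2⟩
  have hmupos : (0:ℝ) < 1 - mu := by linarith [hmu2.2]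
  -- convergence at mu
  have htend : Tendsto (fun n => mix (pn n) (Hn n) mu) atTop (nhds (F mu)) :=
    hconv mu hmuD
  have htendq : Tendsto (fun n => (1 - mix (pn n) (Hn n) mu) / (1 - mu)) atTop
      (nhds ((1 - F mu) / (1 - mu))) :=
    (tendsto_const_nhds.sub htend).div_const _
  -- limsup comparison
  have hle : ∀ n, piF (mix (pn n) (Hn n)) ≤ (1 - mix (pn n) (Hn n) mu) / (1 - mu) :=
    fun n => piF_le (hFnle n) hmu01
  have hcobdd : IsCoboundedUnder (· ≤ ·) atTop (fun n => piF (mix (pn n) (Hn n))) := by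
    apply IsBoundedUnder.isCoboundedUnder_le
    exact ⟨0, eventually_map.2 (Eventually.of_forall fun n => piF_nonneg (hFnle n))⟩
  have hbdd : IsBoundedUnder (· ≤ ·) atTop
      (fun n => (1 - mix (pn n) (Hn n) mu) / (1 - mu)) :=
    htendq.isBoundedUnder_le
  calc Filter.limsup (fun n => piF (mix (pn n) (Hn n))) atTop
      ≤ Filter.limsup (fun n => (1 - mix (pn n) (Hn n) mu) / (1 - mu)) atTop :=
        limsup_le_limsup (Eventually.of_forall hle) hcobdd hbdd
    _ = (1 - F mu) / (1 - mu) := htendq.limsup_eq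
    _ ≤ (1 - F l) / (1 - mu) := by
        have := hFmono (le_of_lt hmu2.1)
        gcongr
    _ ≤ (1 - F l) / (1 - l) + ε / 2 := le_of_lt hmu1
    _ ≤ piF F + ε := by linarith
end

section
/- Let H and H* be CDFs on [0,1] satisfying lim_{y→0+} (1 - H(1-y))/y = 0 and lim_{y→0+} (1 - H*(1-y))/y = 0, and π, π* ∈ (0,1). If πx + (1-π)H(x) = π*x + (1-π*)H*(x) for all x ∈ [0,1], then π = π* and H = H*. -/
open Set Filter

lemma mix_tail_tendsto (p : ℝ) (H : ℝ → ℝ)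
    (htail : Tendsto (fun y => (1 - H (1 - y)) / y) (nhdsWithin 0 (Ioi (0:ℝ)))
      (nhds 0)) :
    Tendsto (fun y => (1 - mix p H (1 - y)) / y) (nhdsWithin 0 (Ioi (0:ℝ)))
      (nhds p) := by
  have h1 : Tendsto (fun y => p + (1 - p) * ((1 - H (1 - y)) / y))
      (nhdsWithin 0 (Ioi (0:ℝ))) (nhds (p + (1 - p) * 0)) :=
    tendsto_const_nhds.add (tendsto_const_nhds.mul htail)
  rw [mul_zero, add_zero] at h1
  refine h1.congr' ?_
  filter_upwards [Ioo_mem_nhdsGT_of_mem (⟨le_refl 0, one_pos⟩ : (0:ℝ) ∈ Ico 0 1)]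
    with y hy
  have hy0 : y ≠ 0 := ne_of_gt hy.1
  have hu : unifCDF (1 - y) = 1 - y := by
    unfold unifCDF
    rw [min_eq_left (by linarith [hy.1]), max_eq_right (by linarith [hy.2])]
  simp only [mix, hu]
  field_simp
  ring

/-- identifiability of `(π, H)` from the mixture CDF under the
thin-tail-at-1 condition `1 - H(1-y) = o(y)` as `y → 0+`. -/
theorem mixture_cdf_identifiable
    (p ps : ℝ) (H Hs : ℝ → ℝ)
    (hp : p ∈ Ioo (0:ℝ) 1) (hps : ps ∈ Ioo (0:ℝ) 1)
    (hH : IsCDF01 H) (hHs : IsCDF01 Hs)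
    (htail : Tendsto (fun y => (1 - H (1 - y)) / y) (nhdsWithin 0 (Ioi (0:ℝ)))
      (nhds 0))
    (htails : Tendsto (fun y => (1 - Hs (1 - y)) / y) (nhdsWithin 0 (Ioi (0:ℝ)))
      (nhds 0))
    (heq : ∀ x, mix p H x = mix ps Hs x) :
    p = ps ∧ ∀ x, H x = Hs x := by
  have h1 := mix_tail_tendsto p H htail
  have h2 := mix_tail_tendsto ps Hs htails
  have hfun : (fun y => (1 - mix p H (1 - y)) / y)
      = (fun y => (1 - mix ps Hs (1 - y)) / y) := by
    funext y; rw [heq]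
  rw [hfun] at h1
  have hpes : p = ps := tendsto_nhds_unique h1 h2
  refine ⟨hpes, fun x => ?_⟩
  have := heq x
  rw [hpes] at this
  unfold mix at this
  have hne : (1 : ℝ) - ps ≠ 0 := by
    have := hps.2; intro h; linarith
  have : (1 - ps) * H x = (1 - ps) * Hs x := by linarith
  exact mul_left_cancel₀ hne this
end

section
/- If a density h on (0,1) with CDF H admits the representation h(x) = ∫ b·(1-x)^{b-1} dG(b) for a probability measure G on [1,∞), then y ↦ H̄(1 - e^{-y}) = 1 - H(1 - e^{-y}) is completely monotone on [0,∞). -/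
/-!
For `y > 0`, put `x = 1 - e^{-y}`. Fubini and `∫₀ˣ b (1-t)^{b-1} dt = 1 - (1-x)^b` give
`1 - H(1 - e^{-y}) = ∫ e^{-by} dG(b)`, the Laplace transform of a measure on `[0,∞)`, whose `n`-th
derivative is `(-1)^n ∫ bⁿ e^{-by} dG(b)` by differentiation under the integral sign.
At `y = 0` the iterated derivatives are two-sided and also see the unconstrained values at `y < 0`;
their sign comes instead from the monotonicity on `(0,∞)` of the previous derivative.
-/

open Set MeasureTheory

/-- Completely monotone on `[0,∞)`. -/
def CompletelyMonotoneOn01 (φ : ℝ → ℝ) : Prop :=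
  ∀ (n : ℕ) (y : ℝ), 0 ≤ y → 0 ≤ (-1 : ℝ) ^ n * iteratedDeriv n φ y

open Filter Real

lemma pow_mul_exp_neg_mul_le (k : ℕ) {δ b : ℝ} (hδ : 0 < δ) (hb : 0 ≤ b) :
    b ^ k * exp (-(b * δ)) ≤ k.factorial / δ ^ k := by
  have h := pow_div_factorial_le_exp (x := b * δ) (mul_nonneg hb hδ.le) k
  rw [div_le_iff₀ (by positivity), mul_pow] at h
  rw [exp_neg, ← div_eq_mul_inv, div_le_div_iff₀ (exp_pos _) (pow_pos hδ k)]
  linarith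

lemma deriv_nonpos_of_antitoneOn_Ioi {g : ℝ → ℝ} {a : ℝ} (hg : AntitoneOn g (Ioi a)) :
    deriv g a ≤ 0 := by
  by_cases hd : DifferentiableAt ℝ g a
  · exact hd.hasDerivAt.hasDerivWithinAt.nonpos_of_antitoneOn
      (uniqueDiffWithinAt_iff_accPt.1 (uniqueDiffWithinAt_Ioi a)) hg
  · simp [deriv_zero_of_not_differentiableAt hd]

theorem completelyMonotoneOn01_of_pos {φ : ℝ → ℝ} (h0 : 0 ≤ φ 0)
    (hdiff : ∀ n y, 0 < y → DifferentiableAt ℝ (iteratedDeriv n φ) y)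
    (hsign : ∀ n y, 0 < y → 0 ≤ (-1) ^ n * iteratedDeriv n φ y) :
    CompletelyMonotoneOn01 φ := by
  intro n y hy
  rcases hy.eq_or_lt with rfl | hy
  · cases n with
    | zero => simpa using h0
    | succ m =>
      have hanti : AntitoneOn (fun y => (-1) ^ m * iteratedDeriv m φ y) (Ioi 0) := by
        have hd : DifferentiableOn ℝ (fun y => (-1) ^ m * iteratedDeriv m φ y) (Ioi 0) :=
          fun y hy => ((hdiff m y hy).const_mul _).differentiableWithinAt
        refine antitoneOn_of_deriv_nonpos (convex_Ioi 0) hd.continuousOn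
          (by rwa [interior_Ioi]) fun y hy => ?_
        rw [interior_Ioi] at hy
        have := hsign (m + 1) y hy
        rw [pow_succ] at this
        rw [deriv_const_mul_field, ← iteratedDeriv_succ]
        linarith
      have := deriv_nonpos_of_antitoneOn_Ioi hanti
      rw [deriv_const_mul_field] at this
      rw [iteratedDeriv_succ, pow_succ]
      linarith
  · exact hsign n y hy

noncomputable def laplaceMoment (G : Measure ℝ) (n : ℕ) (y : ℝ) : ℝ :=
  ∫ b, b ^ n * exp (-(b * y)) ∂G

section laplaceMoment

variable {G : Measure ℝ}

lemma laplaceMoment_nonneg (hG : ∀ᵐ b ∂G, 0 ≤ b) (n : ℕ) (y : ℝ) : 0 ≤ laplaceMoment G n y :=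
  integral_nonneg_of_ae <| hG.mono fun b hb => by positivity

variable [IsFiniteMeasure G]

lemma integrable_pow_mul_exp_neg_mul (hG : ∀ᵐ b ∂G, 0 ≤ b) (n : ℕ) {y : ℝ} (hy : 0 < y) :
    Integrable (fun b => b ^ n * exp (-(b * y))) G := by
  refine (integrable_const ((n.factorial : ℝ) / y ^ n)).mono'
    (by fun_prop : Continuous fun b : ℝ => b ^ n * exp (-(b * y))).aestronglyMeasurable ?_
  filter_upwards [hG] with b hb
  rw [norm_of_nonneg (by positivity)]
  exact pow_mul_exp_neg_mul_le n hy hb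

-- Dominated on `(y/2, 3y/2)` by `(n+1)! / (y/2)^(n+1)`.
lemma hasDerivAt_laplaceMoment (hG : ∀ᵐ b ∂G, 0 ≤ b) (n : ℕ) {y : ℝ} (hy : 0 < y) :
    HasDerivAt (laplaceMoment G n) (-laplaceMoment G (n + 1) y) y := by
  have hy2 : 0 < y / 2 := half_pos hy
  have hderiv : ∀ b x : ℝ, HasDerivAt (fun x => b ^ n * exp (-(b * x)))
      (-(b ^ (n + 1) * exp (-(b * x)))) x := fun b x => by
    have h : HasDerivAt (fun x => -(b * x)) (-b) x := by
      simpa using ((hasDerivAt_id' x).const_mul b).fun_neg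
    exact (h.exp.const_mul (b ^ n)).congr_deriv (by ring)
  have hbound : ∀ᵐ b ∂G, ∀ x ∈ Metric.ball y (y / 2),
      ‖-(b ^ (n + 1) * exp (-(b * x)))‖ ≤ (n + 1).factorial / (y / 2) ^ (n + 1) := by
    filter_upwards [hG] with b hb x hx
    have hxy : y / 2 ≤ x := by
      rw [Metric.mem_ball, dist_eq, abs_lt] at hx
      linarith [hx.1]
    rw [norm_neg, norm_of_nonneg (by positivity)]
    calc b ^ (n + 1) * exp (-(b * x)) ≤ b ^ (n + 1) * exp (-(b * (y / 2))) := by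
          gcongr
      _ ≤ _ := pow_mul_exp_neg_mul_le (n + 1) hy2 hb
  have h := (hasDerivAt_integral_of_dominated_loc_of_deriv_le (Metric.ball_mem_nhds y hy2)
    (Eventually.of_forall fun x =>
      (by fun_prop : Continuous fun b : ℝ => b ^ n * exp (-(b * x))).aestronglyMeasurable)
    (integrable_pow_mul_exp_neg_mul hG n hy)
    (by fun_prop : Continuous fun b : ℝ => -(b ^ (n + 1) * exp (-(b * y)))).aestronglyMeasurable
    hbound (integrable_const _) (Eventually.of_forall fun b x _ => hderiv b x)).2
  rwa [integral_neg] at h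

lemma iteratedDeriv_eqOn_laplaceMoment (hG : ∀ᵐ b ∂G, 0 ≤ b) {φ : ℝ → ℝ}
    (hφ : EqOn φ (laplaceMoment G 0) (Ioi 0)) (n : ℕ) :
    EqOn (iteratedDeriv n φ) (fun y => (-1) ^ n * laplaceMoment G n y) (Ioi 0) := by
  induction n with
  | zero => simpa using hφ
  | succ m ih =>
    intro y hy
    rw [iteratedDeriv_succ, (ih.eventuallyEq_of_mem (Ioi_mem_nhds hy)).deriv_eq,
      ((hasDerivAt_laplaceMoment hG m hy).const_mul _).deriv, pow_succ]
    ring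

theorem completelyMonotoneOn01_of_eqOn_laplaceMoment (hG : ∀ᵐ b ∂G, 0 ≤ b) {φ : ℝ → ℝ}
    (h0 : 0 ≤ φ 0) (hφ : EqOn φ (laplaceMoment G 0) (Ioi 0)) : CompletelyMonotoneOn01 φ := by
  have hEq := iteratedDeriv_eqOn_laplaceMoment hG hφ
  refine completelyMonotoneOn01_of_pos h0 (fun n y hy => ?_) (fun n y hy => ?_)
  · exact ((hasDerivAt_laplaceMoment hG n hy).const_mul _).differentiableAt.congr_of_eventuallyEq
      ((hEq n).eventuallyEq_of_mem (Ioi_mem_nhds hy))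
  · rw [hEq n hy, ← mul_assoc, ← mul_pow]
    simpa using laplaceMoment_nonneg hG n y

end laplaceMoment

lemma continuousOn_mul_one_sub_rpow (b : ℝ) {x : ℝ} (hx1 : x < 1) :
    ContinuousOn (fun t => b * (1 - t) ^ (b - 1)) (Iic x) :=
  continuousOn_const.mul <| (by fun_prop : ContinuousOn (fun t : ℝ => 1 - t) _).rpow_const
    fun t ht => Or.inl (by linarith [mem_Iic.1 ht])

lemma integral_Ioc_mul_one_sub_rpow (b : ℝ) {x : ℝ} (hx0 : 0 ≤ x) (hx1 : x < 1) :
    ∫ t in Ioc 0 x, b * (1 - t) ^ (b - 1) = 1 - (1 - x) ^ b := by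
  have hne : ∀ t ∈ uIcc 0 x, 1 - t ≠ 0 := fun t ht => by
    rw [uIcc_of_le hx0] at ht
    linarith [ht.2]
  have hderiv : ∀ t ∈ uIcc 0 x,
      HasDerivAt (fun u => -(1 - u) ^ b) (b * (1 - t) ^ (b - 1)) t := fun t ht => by
    have h : HasDerivAt (fun u => 1 - u) (-1) t := by simpa using (hasDerivAt_id' t).const_sub 1
    exact (h.rpow_const (Or.inl (hne t ht))).fun_neg.congr_deriv (by ring)
  have hcont := (continuousOn_mul_one_sub_rpow b hx1).mono (uIcc_of_le hx0 ▸ Icc_subset_Iic_self)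
  rw [← intervalIntegral.integral_of_le hx0,
    intervalIntegral.integral_eq_sub_of_hasDerivAt hderiv hcont.intervalIntegrable]
  simp only [sub_zero, one_rpow, sub_neg_eq_add]
  ring

lemma integrable_rpow_of_nonneg_of_le_one {G : Measure ℝ} [IsFiniteMeasure G]
    (hG : ∀ᵐ b ∂G, 0 ≤ b) {r : ℝ} (hr0 : 0 ≤ r) (hr1 : r ≤ 1) :
    Integrable (fun b => r ^ b) G := by
  refine (integrable_const (1 : ℝ)).mono'
    (by fun_prop : Measurable fun b : ℝ => r ^ b).aestronglyMeasurable ?_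
  filter_upwards [hG] with b hb
  rw [norm_of_nonneg (rpow_nonneg hr0 b)]
  exact rpow_le_one hr0 hr1 hb

-- The integrand is nonnegative with `t`-integrals `1 - (1-x)^b ∈ [0,1]`, so Fubini applies.
lemma integral_Ioc_integral_mul_one_sub_rpow {G : Measure ℝ} [IsFiniteMeasure G]
    (hG : ∀ᵐ b ∂G, 0 ≤ b) {x : ℝ} (hx0 : 0 ≤ x) (hx1 : x < 1) :
    ∫ t in Ioc 0 x, ∫ b, b * (1 - t) ^ (b - 1) ∂G = ∫ b, (1 - (1 - x) ^ b) ∂G := by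
  set F : ℝ → ℝ → ℝ := fun b t => b * (1 - t) ^ (b - 1)
  have hnorm : ∀ᵐ b ∂G, ∫ t in Ioc 0 x, ‖F b t‖ = 1 - (1 - x) ^ b := by
    filter_upwards [hG] with b hb
    rw [← integral_Ioc_mul_one_sub_rpow b hx0 hx1]
    refine setIntegral_congr_fun measurableSet_Ioc fun t ht => norm_of_nonneg ?_
    have : 0 < 1 - t := by linarith [ht.2]
    positivity
  have hint : Integrable (Function.uncurry F) (G.prod (volume.restrict (Ioc 0 x))) := by
    have hmeas : Measurable (Function.uncurry F) := by fun_prop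
    refine (integrable_prod_iff hmeas.aestronglyMeasurable).2 ⟨Eventually.of_forall fun b => ?_, ?_⟩
    · exact ((continuousOn_mul_one_sub_rpow b hx1).mono Icc_subset_Iic_self).integrableOn_Icc
        |>.mono_set Ioc_subset_Icc_self
    · exact ((integrable_const 1).sub (integrable_rpow_of_nonneg_of_le_one hG (by linarith)
        (by linarith))).congr (hnorm.mono fun b hb => hb.symm)
  rw [← integral_integral_swap hint]
  exact integral_congr_ae (Eventually.of_forall fun b => integral_Ioc_mul_one_sub_rpow b hx0 hx1)

lemma one_sub_cdf_one_sub_exp_eq_laplaceMoment {G : Measure ℝ} [IsProbabilityMeasure G]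
    (hG : ∀ᵐ b ∂G, 0 ≤ b) {h H : ℝ → ℝ}
    (hh : ∀ x ∈ Ioo (0 : ℝ) 1, h x = ∫ b, b * (1 - x) ^ (b - 1) ∂G)
    (hH : ∀ x ∈ Icc (0 : ℝ) 1, H x = ∫ t in Ioc (0 : ℝ) x, h t) {y : ℝ} (hy : 0 < y) :
    1 - H (1 - exp (-y)) = laplaceMoment G 0 y := by
  set x := 1 - exp (-y)
  have hx0 : 0 ≤ x := sub_nonneg.2 (exp_le_one_iff.2 (neg_nonpos.2 hy.le))
  have hx1 : x < 1 := sub_lt_self 1 (exp_pos (-y))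
  have hpow : ∀ b : ℝ, (1 - x) ^ b = b ^ 0 * exp (-(b * y)) := fun b => by
    rw [sub_sub_cancel, ← exp_mul, pow_zero, one_mul, mul_comm, mul_neg]
  rw [hH x ⟨hx0, hx1.le⟩,
    setIntegral_congr_fun measurableSet_Ioc fun t ht => hh t ⟨ht.1, ht.2.trans_lt hx1⟩,
    integral_Ioc_integral_mul_one_sub_rpow hG hx0 hx1,
    integral_sub (integrable_const 1)
      (integrable_rpow_of_nonneg_of_le_one hG (by linarith) (by linarith))]
  simp only [integral_const, probReal_univ, smul_eq_mul, mul_one, hpow, sub_sub_cancel,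
    laplaceMoment]

/-- if `h(x) = ∫ b (1-x)^{b-1} dG(b)` for a probability measure `G`
on `[1,∞)`, then `y ↦ 1 - H(1 - e^{-y})` is completely monotone on `[0,∞)`. -/
theorem beta_1b_mixture_completely_monotone
    (G : Measure ℝ) [IsProbabilityMeasure G] (hG : G (Ici (1:ℝ)) = 1)
    (h H : ℝ → ℝ)
    (hh : ∀ x ∈ Ioo (0:ℝ) 1, h x = ∫ b, b * (1 - x) ^ (b - 1) ∂G)
    (hH : ∀ x ∈ Icc (0:ℝ) 1, H x = ∫ t in Ioc (0:ℝ) x, h t) :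
    CompletelyMonotoneOn01 (fun y => 1 - H (1 - Real.exp (-y))) := by
  have hG0 : ∀ᵐ b ∂G, 0 ≤ b := by
    filter_upwards [(mem_ae_iff_prob_eq_one measurableSet_Ici).2 hG] with b hb
    exact zero_le_one.trans hb
  refine completelyMonotoneOn01_of_eqOn_laplaceMoment hG0 ?_
    fun y hy => one_sub_cdf_one_sub_exp_eq_laplaceMoment hG0 hh hH hy
  simp [hH 0 ⟨le_rfl, zero_le_one⟩]
end
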